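/- Let φ : 𝔻 → 𝔻 be holomorphic and suppose ∫₀¹ (1 - D_h φ(r)) · λ(r) dr < +∞, where λ(r) = 2/(1-r²). Then for every R ∈ (0,1), ∫_R¹ (1 - D_h φ(r)) λ(r) dr ≥ (1 - D_h φ(R))/2. Consequently D_h φ(r) → 1 as r → 1⁻. -/

import Mathlib

/-!
The hyperbolic difference quotient `hypDslope φ c`, i.e. `mobius (φ c) (φ z) / mobius c z`, is
holomorphic with values in the closed disc by Schwarz–Pick, and has modulus `D_h φ c` at `z = c`.
Applying Schwarz–Pick once more to it, between `c` and `z` and then between `z` and `c`, gives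
`(1 - D_h φ c) (1 - p)² ≤ (1 - D_h φ z) (1 + p)²` with `p = ‖mobius c z‖`, i.e.
`1 - D_h φ z ≥ (1 - D_h φ c) e^{-2ρ(c, z)}` for the hyperbolic distance `ρ`. On the radius
`λ(r) dr = dρ`, so integrating this bound over `(R, 1)` gives exactly `(1 - D_h φ R) / 2`.
Since tail integrals of an integrable function tend to `0`, so does `1 - D_h φ r`.
-/

open Metric Set MeasureTheory Filter

noncomputable def Dh (φ : ℂ → ℂ) (z : ℂ) : ℝ :=
  (1 - ‖z‖ ^ 2) * ‖deriv φ z‖ / (1 - ‖φ z‖ ^ 2)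

open scoped ComplexConjugate Topology

noncomputable def mobius (c z : ℂ) : ℂ := (c - z) / (1 - conj c * z)

section Mobius

variable {c z : ℂ}

lemma one_sub_conj_mul_ne_zero (hc : ‖c‖ ≤ 1) (hz : ‖z‖ < 1) : 1 - conj c * z ≠ 0 := by
  have : ‖conj c * z‖ < 1 := by
    rw [norm_mul, Complex.norm_conj]
    nlinarith [norm_nonneg c, norm_nonneg z]
  intro h
  rw [← sub_eq_zero.1 h, norm_one] at this
  exact this.false

lemma sq_norm_one_sub_conj_mul_sub_sq_norm_sub (c z : ℂ) :
    ‖1 - conj c * z‖ ^ 2 - ‖c - z‖ ^ 2 = (1 - ‖c‖ ^ 2) * (1 - ‖z‖ ^ 2) := by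
  simp only [Complex.sq_norm, Complex.normSq_apply, Complex.sub_re, Complex.sub_im,
    Complex.mul_re, Complex.mul_im, Complex.conj_re, Complex.conj_im, Complex.one_re,
    Complex.one_im]
  ring

lemma norm_mobius_lt_one (hc : ‖c‖ < 1) (hz : ‖z‖ < 1) : ‖mobius c z‖ < 1 := by
  have hd : 0 < ‖1 - conj c * z‖ := norm_pos_iff.2 (one_sub_conj_mul_ne_zero hc.le hz)
  rw [mobius, norm_div, div_lt_one hd]
  have key := sq_norm_one_sub_conj_mul_sub_sq_norm_sub c z
  have : 0 < (1 - ‖c‖ ^ 2) * (1 - ‖z‖ ^ 2) := by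
    apply mul_pos <;> nlinarith [norm_nonneg c, norm_nonneg z]
  exact lt_of_pow_lt_pow_left₀ 2 hd.le (by linarith)

lemma mapsTo_mobius (hc : ‖c‖ < 1) : MapsTo (mobius c) (ball 0 1) (ball 0 1) := fun z hz => by
  rw [mem_ball_zero_iff] at hz ⊢
  exact norm_mobius_lt_one hc hz

@[simp] lemma mobius_self (c : ℂ) : mobius c c = 0 := by simp [mobius]

@[simp] lemma mobius_zero_right (c : ℂ) : mobius c 0 = c := by simp [mobius]

lemma mobius_mobius (hc : ‖c‖ < 1) (hz : ‖z‖ < 1) : mobius c (mobius c z) = z := by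
  have hD := one_sub_conj_mul_ne_zero hc.le hz
  have hK := one_sub_conj_mul_ne_zero hc.le hc
  have hden : 1 - conj c * mobius c z = (1 - conj c * c) / (1 - conj c * z) := by
    rw [mobius, eq_div_iff hD, sub_mul, mul_assoc, div_mul_cancel₀ _ hD]; ring
  have hnum : c - mobius c z = z * (1 - conj c * c) / (1 - conj c * z) := by
    rw [mobius, eq_div_iff hD, sub_mul, div_mul_cancel₀ _ hD]; ring
  rw [mobius, hden, hnum, div_div_div_cancel_right₀ hD, mul_div_assoc, div_self hK, mul_one]

lemma differentiableOn_mobius (hc : ‖c‖ < 1) : DifferentiableOn ℂ (mobius c) (ball 0 1) :=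
  DifferentiableOn.div (by fun_prop) (by fun_prop) fun z hz =>
    one_sub_conj_mul_ne_zero hc.le (mem_ball_zero_iff.1 hz)

lemma norm_mobius_comm (c z : ℂ) : ‖mobius c z‖ = ‖mobius z c‖ := by
  rw [mobius, mobius, norm_div, norm_div, norm_sub_rev c z, ← Complex.norm_conj (1 - conj z * c)]
  congr 2
  simp only [map_sub, map_one, map_mul, Complex.conj_conj]
  ring

lemma norm_sub_norm_le_norm_mobius_mul (hc : ‖c‖ < 1) (hz : ‖z‖ < 1) :
    ‖z‖ - ‖c‖ ≤ ‖mobius c z‖ * (1 - ‖c‖ * ‖z‖) := by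
  have hN : 1 - ‖c‖ * ‖z‖ ≤ ‖1 - conj c * z‖ := by
    simpa [norm_mul, Complex.norm_conj] using norm_sub_norm_le (1 : ℂ) (conj c * z)
  have hxy : 0 < 1 - ‖c‖ * ‖z‖ := by nlinarith [norm_nonneg c, norm_nonneg z]
  have hpos : 0 ≤ (1 - ‖c‖ ^ 2) * (1 - ‖z‖ ^ 2) := by
    apply mul_nonneg <;> nlinarith [norm_nonneg c, norm_nonneg z]
  have key := sq_norm_one_sub_conj_mul_sub_sq_norm_sub c z
  rw [mobius, norm_div, div_mul_eq_mul_div, le_div_iff₀ (hxy.trans_le hN)]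
  rcases le_total ‖z‖ ‖c‖ with hle | hle
  · nlinarith [mul_nonneg (norm_nonneg (c - z)) hxy.le, norm_nonneg (1 - conj c * z)]
  · refine le_of_pow_le_pow_left₀ two_ne_zero (by positivity) ?_
    have hN2 : (1 - ‖c‖ * ‖z‖) ^ 2 ≤ ‖1 - conj c * z‖ ^ 2 := pow_le_pow_left₀ hxy.le hN 2
    nlinarith [mul_le_mul_of_nonneg_left hN2 hpos]

lemma norm_mobius_ofReal_of_le {R r : ℝ} (hRr : R ≤ r) (h : R * r < 1) :
    ‖mobius R r‖ = (r - R) / (1 - R * r) := by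
  rw [mobius, Complex.conj_ofReal, ← Complex.ofReal_sub, ← Complex.ofReal_mul,
    ← Complex.ofReal_one, ← Complex.ofReal_sub, ← Complex.ofReal_div, Complex.norm_real,
    Real.norm_eq_abs, abs_div, abs_of_nonpos (by linarith), abs_of_pos (by linarith), neg_sub]

end Mobius

theorem schwarz_pick {g : ℂ → ℂ} (hg : DifferentiableOn ℂ g (ball 0 1))
    (hmap : MapsTo g (ball 0 1) (ball 0 1)) {z w : ℂ} (hz : z ∈ ball 0 1)
    (hw : w ∈ ball 0 1) : ‖mobius (g w) (g z)‖ ≤ ‖mobius w z‖ := by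
  have hw1 : ‖w‖ < 1 := mem_ball_zero_iff.1 hw
  have hgw : ‖g w‖ < 1 := mem_ball_zero_iff.1 (hmap hw)
  -- conjugating by the involutions swapping `w`, `g w` with `0` reduces to the Schwarz lemma
  set h : ℂ → ℂ := mobius (g w) ∘ g ∘ mobius w
  have hh : DifferentiableOn ℂ h (ball 0 1) :=
    (differentiableOn_mobius hgw).comp (hg.comp (differentiableOn_mobius hw1) (mapsTo_mobius hw1))
      (hmap.comp (mapsTo_mobius hw1))
  have hh_maps : MapsTo h (ball 0 1) (ball 0 1) :=
    (mapsTo_mobius hgw).comp (hmap.comp (mapsTo_mobius hw1))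
  have hh0 : h 0 = 0 := by simp [h]
  have := Complex.norm_le_norm_of_mapsTo_ball hh (hh_maps.mono_right ball_subset_closedBall) hh0
    (mem_ball_zero_iff.1 (mapsTo_mobius hw1 hz))
  rwa [show h (mobius w z) = mobius (g w) (g z) by
    simp only [h, Function.comp_apply, mobius_mobius hw1 (mem_ball_zero_iff.1 hz)]] at this

lemma one_sub_norm_mul_le_of_norm_mobius_le {u v : ℂ} {p : ℝ} (hu : ‖u‖ < 1) (hv : ‖v‖ < 1)
    (hp : ‖mobius v u‖ ≤ p) : (1 - ‖v‖) * (1 - p) ≤ (1 - ‖u‖) * (1 + p) := by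
  have h := norm_sub_norm_le_norm_mobius_mul hv hu
  have hxy : 0 ≤ 1 - ‖v‖ * ‖u‖ := by nlinarith [norm_nonneg u, norm_nonneg v]
  nlinarith [mul_le_mul_of_nonneg_right hp hxy, norm_nonneg (mobius v u),
    mul_nonneg (sub_nonneg.2 hu.le) (sub_nonneg.2 hv.le)]

theorem one_sub_norm_mul_le_of_mapsTo_closedBall {F : ℂ → ℂ}
    (hF : DifferentiableOn ℂ F (ball 0 1)) (hmap : MapsTo F (ball 0 1) (closedBall 0 1))
    {z w : ℂ} (hz : z ∈ ball 0 1) (hw : w ∈ ball 0 1) :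
    (1 - ‖F w‖) * (1 - ‖mobius w z‖) ≤ (1 - ‖F z‖) * (1 + ‖mobius w z‖) := by
  set p := ‖mobius w z‖
  -- `s * F` maps into the open disc for `s < 1`; let `s → 1`
  have hs : ∀ s ∈ Ioo (0 : ℝ) 1,
      (1 - s * ‖F w‖) * (1 - p) ≤ (1 - s * ‖F z‖) * (1 + p) := by
    intro s ⟨hs0, hs1⟩
    have hnorm : ∀ ζ, ‖(s : ℂ) * F ζ‖ = s * ‖F ζ‖ := fun ζ => by
      rw [norm_mul, Complex.norm_real, Real.norm_of_nonneg hs0.le]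
    have hsF : MapsTo (fun ζ => (s : ℂ) * F ζ) (ball 0 1) (ball 0 1) := fun ζ hζ => by
      rw [mem_ball_zero_iff, hnorm]
      have := mem_closedBall_zero_iff.1 (hmap hζ)
      nlinarith
    have := one_sub_norm_mul_le_of_norm_mobius_le (mem_ball_zero_iff.1 (hsF hz))
      (mem_ball_zero_iff.1 (hsF hw)) (schwarz_pick (hF.const_mul _) hsF hz hw)
    rwa [hnorm, hnorm] at this
  have hlim : ∀ a b : ℝ, Tendsto (fun s : ℝ => (1 - s * a) * b) (𝓝[<] 1) (𝓝 ((1 - a) * b)) :=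
    fun a b => by simpa using ((by fun_prop : Continuous fun s : ℝ => (1 - s * a) * b).tendsto 1
      |>.mono_left nhdsWithin_le_nhds)
  exact le_of_tendsto_of_tendsto (hlim _ _) (hlim _ _)
    (eventually_of_mem (Ioo_mem_nhdsLT one_pos) hs)

/-- The hyperbolic difference quotient: `mobius (φ c) (φ z) / mobius c z` off the diagonal,
extended holomorphically across `z = c`. -/
noncomputable def hypDslope (φ : ℂ → ℂ) (c : ℂ) : ℂ → ℂ := fun z =>
  dslope φ c z * (1 - conj c * z) / (1 - conj (φ c) * φ z)

section HypDslope

variable {φ : ℂ → ℂ} {c z : ℂ}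

lemma differentiableOn_hypDslope (hφ : DifferentiableOn ℂ φ (ball 0 1))
    (hmap : MapsTo φ (ball 0 1) (ball 0 1)) (hc : c ∈ ball 0 1) :
    DifferentiableOn ℂ (hypDslope φ c) (ball 0 1) := by
  have hdslope := (Complex.differentiableOn_dslope (isOpen_ball.mem_nhds hc)).2 hφ
  exact DifferentiableOn.div (hdslope.mul (by fun_prop)) ((differentiableOn_const _).sub
    ((differentiableOn_const _).mul hφ)) fun z hz =>
      one_sub_conj_mul_ne_zero (mem_ball_zero_iff.1 (hmap hc)).le (mem_ball_zero_iff.1 (hmap hz))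

lemma hypDslope_of_ne (hmap : MapsTo φ (ball 0 1) (ball 0 1)) (hc : c ∈ ball 0 1)
    (hz : z ∈ ball 0 1) (hne : z ≠ c) :
    hypDslope φ c z = mobius (φ c) (φ z) / mobius c z := by
  have h1 := one_sub_conj_mul_ne_zero (mem_ball_zero_iff.1 hc).le (mem_ball_zero_iff.1 hz)
  have h2 := one_sub_conj_mul_ne_zero (mem_ball_zero_iff.1 (hmap hc)).le
    (mem_ball_zero_iff.1 (hmap hz))
  have h3 : c - z ≠ 0 := sub_ne_zero.2 hne.symm
  rw [hypDslope, mobius, mobius, dslope_of_ne _ hne, slope_def_field]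
  field_simp
  ring

lemma norm_hypDslope_self (hc : ‖c‖ ≤ 1) (hφc : ‖φ c‖ ≤ 1) : ‖hypDslope φ c c‖ = Dh φ c := by
  have hsq : ∀ w : ℂ, ‖w‖ ≤ 1 → ‖1 - conj w * w‖ = 1 - ‖w‖ ^ 2 := fun w hw => by
    rw [← Complex.normSq_eq_conj_mul_self, ← Complex.sq_norm, ← Complex.ofReal_one,
      ← Complex.ofReal_sub, Complex.norm_real, Real.norm_of_nonneg]
    nlinarith [norm_nonneg w]
  rw [hypDslope, dslope_same, norm_div, norm_mul, hsq c hc, hsq (φ c) hφc, Dh, mul_comm]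

lemma norm_hypDslope_comm (hmap : MapsTo φ (ball 0 1) (ball 0 1)) (hc : c ∈ ball 0 1)
    (hz : z ∈ ball 0 1) : ‖hypDslope φ c z‖ = ‖hypDslope φ z c‖ := by
  rcases eq_or_ne z c with rfl | hne
  · rfl
  rw [hypDslope_of_ne hmap hc hz hne, hypDslope_of_ne hmap hz hc hne.symm, norm_div, norm_div,
    norm_mobius_comm c, norm_mobius_comm (φ c)]

lemma norm_hypDslope_le_one (hφ : DifferentiableOn ℂ φ (ball 0 1))
    (hmap : MapsTo φ (ball 0 1) (ball 0 1)) (hc : c ∈ ball 0 1) (hz : z ∈ ball 0 1) :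
    ‖hypDslope φ c z‖ ≤ 1 := by
  have off_diag : ∀ w ∈ ball (0 : ℂ) 1, w ≠ c → ‖hypDslope φ c w‖ ≤ 1 := fun w hw hne => by
    rw [hypDslope_of_ne hmap hc hw hne, norm_div]
    exact div_le_one_of_le₀ (schwarz_pick hφ hmap hw hc) (norm_nonneg _)
  rcases eq_or_ne z c with rfl | hne
  · have hcont : ContinuousAt (hypDslope φ z) z :=
      ((differentiableOn_hypDslope hφ hmap hz).differentiableAt
        (isOpen_ball.mem_nhds hz)).continuousAt
    refine le_of_tendsto (hcont.norm.tendsto.mono_left (nhdsWithin_le_nhds (s := {z}ᶜ))) ?_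
    filter_upwards [eventually_nhdsWithin_of_eventually_nhds (isOpen_ball.eventually_mem hz),
      self_mem_nhdsWithin] with w hw hne using off_diag w hw hne
  · exact off_diag z hz hne

end HypDslope

lemma hasDerivAt_two_mul_div_one_add_sq {x : ℝ} (hx : x ≠ -1) :
    HasDerivAt (fun r : ℝ => 2 * r / (1 + r) ^ 2) (2 * (1 - x) / (1 + x) ^ 3) x := by
  have hx' : 1 + x ≠ 0 := fun h => hx (by linarith)
  have hnum : HasDerivAt (fun r : ℝ => 2 * r) 2 x := by
    simpa using (hasDerivAt_id x).const_mul (2 : ℝ)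
  have hden : HasDerivAt (fun r : ℝ => (1 + r) ^ 2) (2 * (1 + x)) x := by
    simpa using ((hasDerivAt_id x).const_add 1).fun_pow 2
  refine (hnum.div hden (pow_ne_zero 2 hx')).congr_deriv ?_
  field_simp
  ring

lemma continuousOn_two_mul_one_sub_div_one_add_pow_three :
    ContinuousOn (fun r : ℝ => 2 * (1 - r) / (1 + r) ^ 3) (Ioi (-1)) :=
  ContinuousOn.div (by fun_prop) (by fun_prop) fun x hx =>
    pow_ne_zero 3 (by linarith [mem_Ioi.1 hx])

lemma integral_Ioo_two_mul_one_sub_div_one_add_pow_three {R : ℝ} (hR : -1 < R) (hR1 : R ≤ 1) :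
    ∫ r in Ioo R 1, 2 * (1 - r) / (1 + r) ^ 3 = ((1 - R) / (1 + R)) ^ 2 / 2 := by
  have hsub : uIcc R 1 ⊆ Ioi (-1) := by
    rw [uIcc_of_le hR1]; exact fun x hx => lt_of_lt_of_le hR hx.1
  rw [← integral_Ioc_eq_integral_Ioo, ← intervalIntegral.integral_of_le hR1,
    intervalIntegral.integral_eq_sub_of_hasDerivAt
      (fun x hx => hasDerivAt_two_mul_div_one_add_sq (ne_of_gt (hsub hx)))
      (continuousOn_two_mul_one_sub_div_one_add_pow_three.mono hsub).intervalIntegrable]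
  have : 1 + R ≠ 0 := by linarith
  field_simp
  ring

lemma tendsto_setIntegral_Ioo_nhdsLT {E : Type*} [NormedAddCommGroup E] [NormedSpace ℝ E]
    {f : ℝ → E} {a b : ℝ} (hab : a < b) (hf : IntegrableOn f (Ioo a b)) :
    Tendsto (fun r => ∫ x in Ioo r b, f x) (𝓝[<] b) (𝓝 0) := by
  have hf' : IntegrableOn f (uIcc a b) := by
    rw [uIcc_of_le hab.le]; exact (integrableOn_Icc_iff_integrableOn_Ioo (f := f)).2 hf
  have hcont := intervalIntegral.continuousOn_primitive_interval_left hf'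
  rw [uIcc_of_le hab.le] at hcont
  have h := (hcont b (right_mem_Icc.2 hab.le)).tendsto.mono_left
    (nhdsWithin_mono _ Ioo_subset_Icc_self)
  rw [intervalIntegral.integral_same, nhdsWithin_Ioo_eq_nhdsLT hab] at h
  refine h.congr' ?_
  filter_upwards [Ioo_mem_nhdsLT hab] with r hr
  rw [intervalIntegral.integral_of_le hr.2.le, integral_Ioc_eq_integral_Ioo]

section Distortion

variable {φ : ℂ → ℂ} (hφ : DifferentiableOn ℂ φ (ball 0 1))
  (hmap : MapsTo φ (ball 0 1) (ball 0 1))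
include hφ hmap

lemma Dh_le_one {c : ℂ} (hc : c ∈ ball 0 1) : Dh φ c ≤ 1 := by
  rw [← norm_hypDslope_self (mem_ball_zero_iff.1 hc).le (mem_ball_zero_iff.1 (hmap hc)).le]
  exact norm_hypDslope_le_one hφ hmap hc hc

theorem one_sub_Dh_mul_sq_le {c z : ℂ} (hc : c ∈ ball 0 1) (hz : z ∈ ball 0 1) :
    (1 - Dh φ c) * (1 - ‖mobius c z‖) ^ 2 ≤ (1 - Dh φ z) * (1 + ‖mobius c z‖) ^ 2 := by
  set p := ‖mobius c z‖
  have hp : p < 1 := norm_mobius_lt_one (mem_ball_zero_iff.1 hc) (mem_ball_zero_iff.1 hz)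
  have hself : ∀ w ∈ ball (0 : ℂ) 1, ‖hypDslope φ w w‖ = Dh φ w := fun w hw =>
    norm_hypDslope_self (mem_ball_zero_iff.1 hw).le (mem_ball_zero_iff.1 (hmap hw)).le
  have hmaps : ∀ w ∈ ball (0 : ℂ) 1, MapsTo (hypDslope φ w) (ball 0 1) (closedBall 0 1) :=
    fun w hw ζ hζ => mem_closedBall_zero_iff.2 (norm_hypDslope_le_one hφ hmap hw hζ)
  -- Schwarz–Pick for `hypDslope φ c` and for `hypDslope φ z`, which agree in norm at `z`, `c`
  have step₁ := one_sub_norm_mul_le_of_mapsTo_closedBall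
    (differentiableOn_hypDslope hφ hmap hc) (hmaps c hc) hz hc
  have step₂ := one_sub_norm_mul_le_of_mapsTo_closedBall
    (differentiableOn_hypDslope hφ hmap hz) (hmaps z hz) hz hc
  rw [hself c hc] at step₁
  rw [hself z hz, ← norm_hypDslope_comm hmap hc hz] at step₂
  calc (1 - Dh φ c) * (1 - p) ^ 2 = (1 - Dh φ c) * (1 - p) * (1 - p) := by ring
    _ ≤ (1 - ‖hypDslope φ c z‖) * (1 + p) * (1 - p) :=
      mul_le_mul_of_nonneg_right step₁ (by linarith)
    _ = (1 - ‖hypDslope φ c z‖) * (1 - p) * (1 + p) := by ring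
    _ ≤ (1 - Dh φ z) * (1 + p) * (1 + p) :=
      mul_le_mul_of_nonneg_right step₂ (by positivity)
    _ = (1 - Dh φ z) * (1 + p) ^ 2 := by ring

theorem one_sub_Dh_mul_sq_le_of_le {R r : ℝ} (hR : -1 < R) (hRr : R ≤ r) (hr : r < 1) :
    (1 - Dh φ R) * ((1 - r) * (1 + R)) ^ 2 ≤ (1 - Dh φ r) * ((1 + r) * (1 - R)) ^ 2 := by
  have hball : ∀ x : ℝ, -1 < x → x < 1 → (x : ℂ) ∈ ball 0 1 := fun x h₀ h₁ => by
    rw [mem_ball_zero_iff, Complex.norm_real, Real.norm_eq_abs, abs_lt]; exact ⟨h₀, h₁⟩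
  have hRr1 : 0 < 1 - R * r := by nlinarith
  have hne : 1 - R * r ≠ 0 := hRr1.ne'
  have key := one_sub_Dh_mul_sq_le hφ hmap (hball R hR (by linarith)) (hball r (by linarith) hr)
  rw [norm_mobius_ofReal_of_le hRr (by linarith)] at key
  have e₁ : 1 - (r - R) / (1 - R * r) = (1 - r) * (1 + R) / (1 - R * r) := by
    rw [eq_div_iff hne, sub_mul, div_mul_cancel₀ _ hne]; ring
  have e₂ : 1 + (r - R) / (1 - R * r) = (1 + r) * (1 - R) / (1 - R * r) := by
    rw [eq_div_iff hne, add_mul, div_mul_cancel₀ _ hne]; ring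
  rw [e₁, e₂, div_pow, div_pow, ← mul_div_assoc, ← mul_div_assoc] at key
  exact (div_le_div_iff_of_pos_right (by positivity)).1 key

theorem half_one_sub_Dh_le_setIntegral {R : ℝ} (hR : -1 < R) (hR1 : R < 1)
    (hint : IntegrableOn (fun r : ℝ => (1 - Dh φ r) * (2 / (1 - r ^ 2))) (Ioo R 1)) :
    (1 - Dh φ R) / 2 ≤ ∫ r in Ioo R 1, (1 - Dh φ r) * (2 / (1 - r ^ 2)) := by
  set C := (1 - Dh φ R) * ((1 + R) / (1 - R)) ^ 2
  have hpt : ∀ r ∈ Ioo R 1,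
      C * (2 * (1 - r) / (1 + r) ^ 3) ≤ (1 - Dh φ r) * (2 / (1 - r ^ 2)) := by
    rintro r ⟨hRr, hr⟩
    have h₁ : 0 < 1 - R := by linarith
    have h₂ : 0 < 1 + r := by linarith
    have h₃ : 0 < 1 - r := by linarith
    have hweight : 0 ≤ 2 / (1 - r ^ 2) := by
      rw [show 1 - r ^ 2 = (1 - r) * (1 + r) by ring]; positivity
    have hradial := one_sub_Dh_mul_sq_le_of_le hφ hmap hR hRr.le hr
    calc C * (2 * (1 - r) / (1 + r) ^ 3)
        = (1 - Dh φ R) * ((1 - r) * (1 + R)) ^ 2 / ((1 + r) * (1 - R)) ^ 2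
          * (2 / (1 - r ^ 2)) := by
          rw [show 1 - r ^ 2 = (1 - r) * (1 + r) by ring]
          simp only [C]
          field_simp
      _ ≤ (1 - Dh φ r) * ((1 + r) * (1 - R)) ^ 2 / ((1 + r) * (1 - R)) ^ 2
          * (2 / (1 - r ^ 2)) := by gcongr
      _ = (1 - Dh φ r) * (2 / (1 - r ^ 2)) := by field_simp
  have hC : IntegrableOn (fun r : ℝ => C * (2 * (1 - r) / (1 + r) ^ 3)) (Ioo R 1) :=
    ((continuousOn_two_mul_one_sub_div_one_add_pow_three.mono
      fun x hx => lt_of_lt_of_le hR hx.1).integrableOn_Icc.mono_set Ioo_subset_Icc_self).const_mul C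
  calc (1 - Dh φ R) / 2 = ∫ r in Ioo R 1, C * (2 * (1 - r) / (1 + r) ^ 3) := by
        rw [integral_const_mul, integral_Ioo_two_mul_one_sub_div_one_add_pow_three hR hR1.le]
        have : 1 - R ≠ 0 := by linarith
        have : 1 + R ≠ 0 := by linarith
        simp only [C]
        field_simp
    _ ≤ _ := setIntegral_mono_on hC hint measurableSet_Ioo hpt

end Distortion

theorem radial_distortion_integral (φ : ℂ → ℂ)
    (hφ : DifferentiableOn ℂ φ (ball (0:ℂ) 1))
    (hmap : MapsTo φ (ball (0:ℂ) 1) (ball (0:ℂ) 1))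
    (hint : IntegrableOn (fun r : ℝ => (1 - Dh φ (r : ℂ)) * (2 / (1 - r ^ 2)))
      (Ioo (0:ℝ) 1)) :
    (∀ R ∈ Ioo (0:ℝ) 1,
        (1 - Dh φ (R : ℂ)) / 2
          ≤ ∫ r in Ioo R 1, (1 - Dh φ (r : ℂ)) * (2 / (1 - r ^ 2)))
    ∧ Tendsto (fun r : ℝ => Dh φ (r : ℂ)) (nhdsWithin 1 (Iio 1)) (nhds 1) := by
  have hbound : ∀ R ∈ Ioo (0:ℝ) 1,
      (1 - Dh φ (R : ℂ)) / 2 ≤ ∫ r in Ioo R 1, (1 - Dh φ (r : ℂ)) * (2 / (1 - r ^ 2)) :=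
    fun R hR => half_one_sub_Dh_le_setIntegral hφ hmap (by linarith [hR.1]) hR.2
      (hint.mono_set (Ioo_subset_Ioo_left hR.1.le))
  refine ⟨hbound, ?_⟩
  have hgap : Tendsto (fun r : ℝ => 1 - Dh φ r) (𝓝[<] 1) (𝓝 0) := by
    refine tendsto_of_tendsto_of_tendsto_of_le_of_le' tendsto_const_nhds
      (by simpa using (tendsto_setIntegral_Ioo_nhdsLT one_pos hint).const_mul 2) ?_ ?_
    all_goals filter_upwards [Ioo_mem_nhdsLT one_pos] with r hr
    · have hr' : (r : ℂ) ∈ ball 0 1 := by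
        rw [mem_ball_zero_iff, Complex.norm_real, Real.norm_of_nonneg hr.1.le]; exact hr.2
      linarith [Dh_le_one hφ hmap hr']
    · linarith [hbound r hr]
  simpa using (tendsto_const_nhds (x := (1 : ℝ))).sub hgap
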